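/- (Proposition 2) Let Γ be a finite nonempty set, Δ : Γ → Γ → ℤ a matrix with det Δ ≠ 0, ∂Γ ⊆ Γ and Γ° = Γ \ ∂Γ. Then the sequence 0 → H_ℤ(Γ) → H_ℝ(Γ) → H_{ℝ/ℤ}(Γ) → coker Δ° → 0 is exact, where: the first map is the inclusion induced by ℤ ↪ ℝ; the second map is pointwise reduction modulo ℤ; the third (connecting) map sends a circle-valued harmonic ψ to the class in coker Δ° = ℤ^{Γ°}/Δ°(ℤ^Γ) of Δ°ψ̃ for any real-valued lift ψ̃ of ψ (harmonicity of ψ forces Δ°ψ̃ to be integer-valued, and the class does not depend on the lift). Explicitly: the first map is injective, the image of each map equals the kernel of the next, and the connecting map is surjective onto coker Δ°. -/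
import Mathlib


open scoped BigOperators

/-- `f : Γ → ℤ` is harmonic: `(Δf)(v) = 0` for all interior `v` (i.e. `v ∉ ∂Γ = B`). -/
def HarmInt {Γ : Type} [Fintype Γ] (Δ : Matrix Γ Γ ℤ) (B : Set Γ) (f : Γ → ℤ) : Prop :=
  ∀ v ∉ B, ∑ w, Δ v w * f w = 0

/-- `F : Γ → ℝ` is harmonic: `(ΔF)(v) = 0` for all interior `v`. -/
def HarmReal {Γ : Type} [Fintype Γ] (Δ : Matrix Γ Γ ℤ) (B : Set Γ) (F : Γ → ℝ) : Prop :=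
  ∀ v ∉ B, ∑ w, (Δ v w : ℝ) * F w = 0

/-- `ψ : Γ → ℝ/ℤ` is harmonic: `(Δψ)(v) = 0` for all interior `v`. -/
def HarmCirc {Γ : Type} [Fintype Γ] (Δ : Matrix Γ Γ ℤ) (B : Set Γ)
    (ψ : Γ → AddCircle (1 : ℝ)) : Prop :=
  ∀ v ∉ B, ∑ w, Δ v w • ψ w = 0

/-- Reduction mod `ℤ` as an additive group homomorphism. -/
noncomputable def cmk : ℝ →+ AddCircle (1:ℝ) := QuotientAddGroup.mk' _

lemma cmk_coe (x : ℝ) : cmk x = (x : AddCircle (1:ℝ)) := rfl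

lemma coe_eq_coe_iff (x y : ℝ) :
    (x : AddCircle (1:ℝ)) = (y : AddCircle (1:ℝ)) ↔ ∃ n : ℤ, y = x + n := by
  rw [show ((x : AddCircle (1:ℝ)) = y) ↔ _ from QuotientAddGroup.eq,
    AddSubgroup.mem_zmultiples_iff]
  constructor
  · rintro ⟨n, hn⟩
    exact ⟨n, by simp only [zsmul_eq_mul, mul_one] at hn; linarith⟩
  · rintro ⟨n, rfl⟩
    exact ⟨n, by simp [zsmul_eq_mul]⟩

lemma coe_eq_zero_iff' (x : ℝ) :
    (x : AddCircle (1:ℝ)) = 0 ↔ ∃ n : ℤ, x = n := by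
  rw [show ((0:AddCircle (1:ℝ)) = ((0:ℝ) : AddCircle (1:ℝ))) from rfl, eq_comm, coe_eq_coe_iff]
  simp [eq_comm]

lemma circ_sum {Γ : Type} [Fintype Γ] (Δ : Matrix Γ Γ ℤ) (F : Γ → ℝ) (v : Γ) :
    ∑ w, Δ v w • ((F w : ℝ) : AddCircle (1:ℝ))
      = ((∑ w, (Δ v w : ℝ) * F w : ℝ) : AddCircle (1:ℝ)) := by
  rw [← cmk_coe, map_sum]
  refine Finset.sum_congr rfl fun w _ => ?_
  rw [show (Δ v w : ℝ) * F w = Δ v w • F w from (zsmul_eq_mul _ _).symm, map_zsmul, cmk_coe]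

/-- Proposition 2: exactness of
`0 → H_ℤ(Γ) → H_ℝ(Γ) → H_{ℝ/ℤ}(Γ) → coker Δ° → 0`,
stated elementwise.  The first map is induced by `ℤ ↪ ℝ`, the second is pointwise
reduction mod `ℤ`, and the connecting map sends a circle-valued harmonic function
`ψ` (given here by an arbitrary real lift `F` of it) to the class of `Δ°F` in
`coker Δ° = ℤ^{Γ°}/Δ°(ℤ^Γ)`. -/
theorem exact_sequence_harmonic_coker
    (Γ : Type) [Fintype Γ] [DecidableEq Γ] [Nonempty Γ]
    (Δ : Matrix Γ Γ ℤ) (B : Set Γ) (hΔ : Δ.det ≠ 0) :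
    -- the first map `H_ℤ(Γ) → H_ℝ(Γ)` is well defined and injective
    (∀ f : Γ → ℤ, HarmInt Δ B f → HarmReal Δ B fun v => (f v : ℝ)) ∧
    (∀ f g : Γ → ℤ, HarmInt Δ B f → HarmInt Δ B g →
      (fun v => (f v : ℝ)) = (fun v => (g v : ℝ)) → f = g) ∧
    -- the second map `H_ℝ(Γ) → H_{ℝ/ℤ}(Γ)` is well defined
    (∀ F : Γ → ℝ, HarmReal Δ B F →
      HarmCirc Δ B fun v => (F v : AddCircle (1 : ℝ))) ∧
    -- exactness at `H_ℝ(Γ)`: kernel of reduction = image of `H_ℤ(Γ)`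
    (∀ F : Γ → ℝ, HarmReal Δ B F →
      (((fun v => (F v : AddCircle (1 : ℝ))) = (0 : Γ → AddCircle (1 : ℝ))) ↔
        ∃ f : Γ → ℤ, HarmInt Δ B f ∧ F = fun v => (f v : ℝ))) ∧
    -- well-definedness of the connecting map: harmonicity of the reduction
    -- forces `Δ°F` to be integer-valued ...
    (∀ F : Γ → ℝ, HarmCirc Δ B (fun v => (F v : AddCircle (1 : ℝ))) →
      ∀ v ∉ B, ∃ z : ℤ, ∑ w, (Δ v w : ℝ) * F w = (z : ℝ)) ∧
    -- ... and the class of `Δ°F` in `coker Δ°` does not depend on the lift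
    (∀ F₁ F₂ : Γ → ℝ,
      (fun v => (F₁ v : AddCircle (1 : ℝ))) = (fun v => (F₂ v : AddCircle (1 : ℝ))) →
      HarmCirc Δ B (fun v => (F₁ v : AddCircle (1 : ℝ))) →
      ∃ g : Γ → ℤ, ∀ v ∉ B,
        ∑ w, (Δ v w : ℝ) * F₂ w = ∑ w, (Δ v w : ℝ) * F₁ w + ∑ w, (Δ v w : ℝ) * (g w : ℝ)) ∧
    -- exactness at `H_{ℝ/ℤ}(Γ)`: kernel of the connecting map = image of `H_ℝ(Γ)`
    (∀ F : Γ → ℝ, HarmCirc Δ B (fun v => (F v : AddCircle (1 : ℝ))) →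
      ((∃ g : Γ → ℤ, ∀ v ∉ B,
          ∑ w, (Δ v w : ℝ) * F w = ∑ w, (Δ v w : ℝ) * (g w : ℝ)) ↔
        ∃ G : Γ → ℝ, HarmReal Δ B G ∧
          (fun v => (G v : AddCircle (1 : ℝ))) = fun v => (F v : AddCircle (1 : ℝ)))) ∧
    -- the connecting map is surjective onto `coker Δ°`
    (∀ h : {v : Γ // v ∉ B} → ℤ, ∃ F : Γ → ℝ,
      HarmCirc Δ B (fun v => (F v : AddCircle (1 : ℝ))) ∧
      ∃ g : Γ → ℤ, ∀ v (hv : v ∉ B),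
        ∑ w, (Δ v w : ℝ) * F w = (h ⟨v, hv⟩ : ℝ) + ∑ w, (Δ v w : ℝ) * (g w : ℝ)) := by
  classical
  refine ⟨?_, ?_, ?_, ?_, ?_, ?_, ?_, ?_⟩
  · -- well definedness of first map
    intro f hf v hv
    have := hf v hv
    have h2 : ∑ w, (Δ v w : ℝ) * (f w : ℝ) = 0 := by exact_mod_cast this
    simpa using h2
  · -- injectivity
    intro f g _ _ h
    funext v
    have := congrFun h v
    exact_mod_cast this
  · -- second map well defined
    intro F hF v hv
    rw [circ_sum, hF v hv]
    rfl
  · -- exactness at H_ℝ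
    intro F hF
    constructor
    · intro h
      have hz : ∀ v, ∃ n : ℤ, F v = n := fun v =>
        (coe_eq_zero_iff' (F v)).mp (congrFun h v)
      choose f hfv using hz
      refine ⟨f, fun v hv => ?_, funext hfv⟩
      have := hF v hv
      simp only [hfv] at this
      exact_mod_cast this
    · rintro ⟨f, _, rfl⟩
      funext v
      exact (coe_eq_zero_iff' _).mpr ⟨f v, rfl⟩
  · -- connecting map integer-valued
    intro F hF v hv
    have := hF v hv
    rw [circ_sum] at this
    exact (coe_eq_zero_iff' _).mp this
  · -- independence of lift
    intro F₁ F₂ h _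
    have hz : ∀ v, ∃ n : ℤ, F₂ v = F₁ v + n := fun v =>
      (coe_eq_coe_iff (F₁ v) (F₂ v)).mp (congrFun h v)
    choose g hg using hz
    refine ⟨g, fun v _ => ?_⟩
    rw [← Finset.sum_add_distrib]
    refine Finset.sum_congr rfl fun w _ => ?_
    rw [hg w]; ring
  · -- exactness at H_{ℝ/ℤ}
    intro F _
    constructor
    · rintro ⟨g, hg⟩
      refine ⟨fun v => F v - g v, fun v hv => ?_, ?_⟩
      · have := hg v hv
        simp only [mul_sub]
        rw [Finset.sum_sub_distrib, this, sub_self]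
      · funext v
        exact (coe_eq_coe_iff _ _).mpr ⟨g v, by ring⟩
    · rintro ⟨G, hG, hGF⟩
      have hz : ∀ v, ∃ n : ℤ, F v = G v + n := fun v =>
        (coe_eq_coe_iff (G v) (F v)).mp (congrFun hGF v)
      choose g hg using hz
      refine ⟨g, fun v hv => ?_⟩
      calc ∑ w, (Δ v w : ℝ) * F w = ∑ w, ((Δ v w : ℝ) * G w + (Δ v w : ℝ) * g w) := by
            refine Finset.sum_congr rfl fun w _ => ?_
            rw [hg w]; ring
        _ = ∑ w, (Δ v w : ℝ) * G w + ∑ w, (Δ v w : ℝ) * (g w : ℝ) :=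
            Finset.sum_add_distrib
        _ = ∑ w, (Δ v w : ℝ) * (g w : ℝ) := by rw [hG v hv, zero_add]
  · -- surjectivity of the connecting map
    intro h
    set A : Matrix Γ Γ ℝ := Δ.map (Int.cast) with hA
    have hdet : IsUnit A.det := by
      have : A.det = ((Δ.det : ℤ) : ℝ) := by
        rw [hA]
        exact (RingHom.map_det (Int.castRingHom ℝ) Δ).symm
      rw [this]
      exact (isUnit_iff_ne_zero).mpr (by exact_mod_cast hΔ)
    set H : Γ → ℝ := fun v => if hv : v ∉ B then (h ⟨v, hv⟩ : ℝ) else 0 with hH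
    have hAH : A.mulVec (A⁻¹.mulVec H) = H := by
      rw [Matrix.mulVec_mulVec, Matrix.mul_nonsing_inv A hdet, Matrix.one_mulVec]
    have key : ∀ v, ∑ w, (Δ v w : ℝ) * (A⁻¹.mulVec H) w = H v := fun v => by
      simpa [Matrix.mulVec, dotProduct, hA, Matrix.map_apply] using congrFun hAH v
    refine ⟨A⁻¹.mulVec H, ?_, ?_⟩
    · intro v hv
      rw [circ_sum, key v, hH]
      simp only [hv, dif_pos, not_false_iff]
      exact (coe_eq_zero_iff' _).mpr ⟨h ⟨v, hv⟩, rfl⟩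
    · refine ⟨0, fun v hv => ?_⟩
      rw [key v, hH]
      simp [hv]
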